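/- Let m ≥ 1, let L : Fin m → Set ℝ assign to each index a closed interval with nonempty interior, and let σ, τ be permutations of Fin m. Suppose that L (σ i) = L i for all i, and that for all i, j such that the interiors of L i and L j intersect, one has τ⁻¹ i < τ⁻¹ j if and only if τ⁻¹ (σ i) < τ⁻¹ (σ j). Then σ is the identity permutation. (This expresses that the symmetric group acts freely on the space of overlapping intervals.) -/

import Mathlib

open Function

/-- Take a moved point `a` of least rank. Its predecessor `σ⁻¹ a` is moved as well, so it has
larger rank; the step into `a` goes down, hence so does the step out of `a`, and `σ a` is a
moved point of smaller rank than `a`. -/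
theorem Equiv.Perm.eq_one_of_lt_apply_iff_apply_lt_apply_apply {α β : Type*} [Finite α]
    [LinearOrder β] (σ : Equiv.Perm α) {r : α → β} (hr : Injective r)
    (h : ∀ a, r a < r (σ a) ↔ r (σ a) < r (σ (σ a))) : σ = 1 := by
  by_contra hσ
  have hmoved : {a | σ a ≠ a}.Nonempty := by
    contrapose! hσ
    exact Equiv.ext fun a => not_not.1 fun ha => hσ.subset ha
  obtain ⟨a, ha, hmin⟩ := Set.exists_min_image _ r (Set.toFinite _) hmoved
  have hpred : σ (σ⁻¹ a) = a := σ.apply_symm_apply a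
  have hpred_ne : σ⁻¹ a ≠ a := fun hfix => ha (Equiv.Perm.inv_eq_iff_eq.1 hfix).symm
  have hpred_moved : σ (σ⁻¹ a) ≠ σ⁻¹ a := by rw [hpred]; exact hpred_ne.symm
  have hsucc_moved : σ (σ a) ≠ σ a := fun hfix => ha (σ.injective hfix)
  have hstep_in : r a < r (σ⁻¹ a) :=
    (hmin _ hpred_moved).lt_of_ne (hr.ne hpred_ne.symm)
  have hstep_out : r (σ a) < r a := by
    have := (h (σ⁻¹ a)).not.1 (by rw [hpred]; exact not_lt.2 hstep_in.le)
    rw [hpred] at this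
    exact (not_lt.1 this).lt_of_ne (hr.ne ha)
  exact (hmin _ hsucc_moved).not_gt hstep_out

theorem overlapping_intervals_free_action_general
    (m : ℕ) (L : Fin m → Set ℝ)
    (hL : ∀ i, ∃ a b : ℝ, a < b ∧ L i = Set.Icc a b)
    (σ τ : Equiv.Perm (Fin m))
    (hfix : ∀ i, L (σ i) = L i)
    (hord : ∀ i j : Fin m, (interior (L i) ∩ interior (L j)).Nonempty →
      (τ⁻¹ i < τ⁻¹ j ↔ τ⁻¹ (σ i) < τ⁻¹ (σ j))) :
    σ = 1 := by
  refine σ.eq_one_of_lt_apply_iff_apply_lt_apply_apply τ⁻¹.injective fun i => hord i (σ i) ?_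
  obtain ⟨a, b, hab, hi⟩ := hL i
  rw [hfix, Set.inter_self, hi, interior_Icc]
  exact Set.nonempty_Ioo.2 hab

/-- The symmetric group acts freely on the space of overlapping intervals:
if each interval `L i` is a closed interval with nonempty interior, `L (σ i) = L i`
for all `i`, and for every pair of intervals with intersecting interiors the
permutations `τ` and `τ ∘ σ` induce the same relative order, then `σ = 1`. -/
theorem overlapping_intervals_free_action
    (m : ℕ) (hm : 1 ≤ m) (L : Fin m → Set ℝ)
    (hL : ∀ i, ∃ a b : ℝ, a < b ∧ L i = Set.Icc a b)
    (σ τ : Equiv.Perm (Fin m))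
    (hfix : ∀ i, L (σ i) = L i)
    (hord : ∀ i j : Fin m, (interior (L i) ∩ interior (L j)).Nonempty →
      (τ⁻¹ i < τ⁻¹ j ↔ τ⁻¹ (σ i) < τ⁻¹ (σ j))) :
    σ = 1 :=
  overlapping_intervals_free_action_general m L hL σ τ hfix hord
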